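/- Let D×D be the bidisk in ℂ², let a ∈ D be nonzero, and let z = (0, γ) with 0 < |γ| < |a|. Then the Lempert function of D×D with the single pole (a,0) of weight 1 satisfies δ(z) = log|a|; and a holomorphic disc f = (f₁, f₂): D → D×D with f(0) = z and f(ζ₁) = (a,0) for some ζ₁ ∈ D attains this infimum (i.e. log|ζ₁| = log|a|) if and only if f₁ is a rotation, i.e. f₁(ζ) = αζ for some α ∈ ℂ with |α| = 1. -/

import Mathlib

/-!
The first coordinate of a disc through `(0, γ)` at `0` and `(a, 0)` at `ζ₁` is a self-map of
`D` fixing `0` and sending `ζ₁` to `a`, so `|a| ≤ |ζ₁|` by the Schwarz lemma, with equality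
exactly for rotations. The bound is attained by `ζ ↦ (ζ, (γ / a) · (a - ζ) / (1 - ā ζ))`,
whose second coordinate stays in `D` because `|γ| < |a|`.
-/

open Complex Metric Set Filter Topology

noncomputable section

/-- Extended logarithm, taking the value `-∞` at `0` (and on nonpositive reals). -/
def elog (x : ℝ) : EReal := if x ≤ 0 then (⊥ : EReal) else ((Real.log x : ℝ) : EReal)

variable {E : Type*} [NormedAddCommGroup E] [NormedSpace ℂ E]

/-- `u : E → [-∞, ∞)` is plurisubharmonic on `Ω`: it is upper semicontinuous on `Ω`,
not identically `-∞`, and its restriction to every complex line is subharmonic, expressed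
via the harmonic-majorant property on closed discs (majorants being real parts of
holomorphic functions). -/
def PlurisubharmonicOn (Ω : Set E) (u : E → EReal) : Prop :=
  UpperSemicontinuousOn u Ω ∧ (∃ z ∈ Ω, u z ≠ ⊥) ∧
    ∀ a b : E, ∀ r : ℝ, 0 < r →
      (∀ ζ : ℂ, ‖ζ‖ ≤ r → a + ζ • b ∈ Ω) →
      ∀ F : ℂ → ℂ, DifferentiableOn ℂ F (Metric.closedBall 0 r) →
        (∀ ζ : ℂ, ‖ζ‖ = r → u (a + ζ • b) ≤ ((F ζ).re : EReal)) →
        ∀ ζ : ℂ, ‖ζ‖ ≤ r → u (a + ζ • b) ≤ ((F ζ).re : EReal)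

/-- The open unit bidisk `D × D ⊆ ℂ²`. -/
def bidisk : Set (ℂ × ℂ) := {z | ‖z.1‖ < 1 ∧ ‖z.2‖ < 1}

/-- The Lempert function of `Ω` with poles `w 0, …, w (k-1)` and weights
`ν 0, …, ν (k-1)`: the infimum of `Σ_j ν_j log|ζ_j|` over analytic discs `f : D → Ω` with
`f(0) = z` and `f(ζ_j) = w j` for all `j < k`. -/
def lempert (Ω : Set E) (k : ℕ) (w : ℕ → E) (ν : ℕ → ℝ) (z : E) : EReal :=
  sInf {d : EReal | ∃ f : ℂ → E, DifferentiableOn ℂ f (Metric.ball 0 1) ∧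
    Set.MapsTo f (Metric.ball 0 1) Ω ∧ f 0 = z ∧
    ∃ ζ : ℕ → ℂ, (∀ j < k, ζ j ∈ Metric.ball (0 : ℂ) 1 ∧ f (ζ j) = w j) ∧
      d = ((∑ j ∈ Finset.range k, ν j * Real.log (‖ζ j‖) : ℝ) : EReal)}

open ComplexConjugate

def blaschkeFactor (a ζ : ℂ) : ℂ := (a - ζ) / (1 - conj a * ζ)

@[simp]
lemma blaschkeFactor_zero (a : ℂ) : blaschkeFactor a 0 = a := by
  simp [blaschkeFactor]

@[simp]
lemma blaschkeFactor_self (a : ℂ) : blaschkeFactor a a = 0 := by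
  simp [blaschkeFactor]

lemma normSq_one_sub_conj_mul_sub_normSq_sub (a ζ : ℂ) :
    normSq (1 - conj a * ζ) - normSq (a - ζ) = (1 - normSq a) * (1 - normSq ζ) := by
  simp only [normSq_apply, sub_re, sub_im, mul_re, mul_im, conj_re, conj_im, one_re, one_im]
  ring

lemma norm_sub_le_norm_one_sub_conj_mul {a ζ : ℂ} (ha : ‖a‖ ≤ 1) (hζ : ‖ζ‖ ≤ 1) :
    ‖a - ζ‖ ≤ ‖1 - conj a * ζ‖ := by
  have ha' : normSq a ≤ 1 := by rw [← Complex.sq_norm]; nlinarith [norm_nonneg a]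
  have hζ' : normSq ζ ≤ 1 := by rw [← Complex.sq_norm]; nlinarith [norm_nonneg ζ]
  have h := normSq_one_sub_conj_mul_sub_normSq_sub a ζ
  have hsq : normSq (a - ζ) ≤ normSq (1 - conj a * ζ) := by nlinarith
  rw [← Complex.sq_norm, ← Complex.sq_norm] at hsq
  exact (pow_le_pow_iff_left₀ (norm_nonneg _) (norm_nonneg _) two_ne_zero).mp hsq

lemma norm_blaschkeFactor_le_one {a ζ : ℂ} (ha : ‖a‖ ≤ 1) (hζ : ‖ζ‖ ≤ 1) :
    ‖blaschkeFactor a ζ‖ ≤ 1 := by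
  rw [blaschkeFactor, norm_div]
  exact div_le_one_of_le₀ (norm_sub_le_norm_one_sub_conj_mul ha hζ) (norm_nonneg _)

lemma one_sub_conj_mul_ne_zero {a ζ : ℂ} (ha : ‖a‖ ≤ 1) (hζ : ‖ζ‖ < 1) :
    1 - conj a * ζ ≠ 0 := by
  refine sub_ne_zero.mpr fun h => ?_
  have : ‖conj a * ζ‖ < 1 := by
    rw [norm_mul, norm_conj]
    nlinarith [norm_nonneg a, norm_nonneg ζ]
  simp [← h] at this

lemma differentiableOn_blaschkeFactor {a : ℂ} (ha : ‖a‖ ≤ 1) :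
    DifferentiableOn ℂ (blaschkeFactor a) (ball 0 1) := by
  refine DifferentiableOn.div (by fun_prop) (by fun_prop) fun ζ hζ => ?_
  exact one_sub_conj_mul_ne_zero ha (mem_ball_zero_iff.mp hζ)

lemma exists_norm_eq_one_eqOn_mul_of_norm_apply_eq {g : ℂ → ℂ}
    (hd : DifferentiableOn ℂ g (ball 0 1)) (hm : MapsTo g (ball 0 1) (closedBall 0 1))
    (h₀ : g 0 = 0) {ζ₁ : ℂ} (hζ₁ : ζ₁ ∈ ball 0 1) (hne : ζ₁ ≠ 0) (heq : ‖g ζ₁‖ = ‖ζ₁‖) :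
    ∃ α : ℂ, ‖α‖ = 1 ∧ EqOn g (α * ·) (ball 0 1) := by
  have hslope : ‖dslope g 0 ζ₁‖ = 1 / 1 := by
    rw [dslope_of_ne _ hne, slope_def_field, h₀, sub_zero, sub_zero, norm_div, heq,
      div_self (norm_ne_zero_iff.mpr hne), div_one]
  obtain ⟨α, hα, haff⟩ := affine_of_mapsTo_ball_of_exists_norm_dslope_eq_div' hd
    (by rwa [h₀]) ⟨ζ₁, hζ₁, hslope⟩
  refine ⟨α, by simpa using hα, fun ζ hζ => ?_⟩
  simp [haff hζ, h₀, mul_comm]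

lemma mem_bidisk {z : ℂ × ℂ} : z ∈ bidisk ↔ ‖z.1‖ < 1 ∧ ‖z.2‖ < 1 := Iff.rfl

section DiscsInBidisk

variable {f : ℂ → ℂ × ℂ}

lemma mapsTo_fst_of_mapsTo_bidisk (hm : MapsTo f (ball 0 1) bidisk) :
    MapsTo (fun ζ => (f ζ).1) (ball 0 1) (closedBall 0 1) :=
  fun _ hζ => mem_closedBall_zero_iff.mpr (mem_bidisk.mp (hm hζ)).1.le

lemma norm_fst_le_of_mapsTo_bidisk (hd : DifferentiableOn ℂ f (ball 0 1))
    (hm : MapsTo f (ball 0 1) bidisk) (h₀ : (f 0).1 = 0) {ζ : ℂ} (hζ : ζ ∈ ball 0 1) :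
    ‖(f ζ).1‖ ≤ ‖ζ‖ :=
  norm_le_norm_of_mapsTo_ball hd.fst (mapsTo_fst_of_mapsTo_bidisk hm) h₀
    (mem_ball_zero_iff.mp hζ)

end DiscsInBidisk

def extremalDisc (a γ ζ : ℂ) : ℂ × ℂ := (ζ, γ / a * blaschkeFactor a ζ)

section ExtremalDisc

variable {a γ : ℂ}

lemma differentiableOn_extremalDisc (ha : ‖a‖ ≤ 1) :
    DifferentiableOn ℂ (extremalDisc a γ) (ball 0 1) :=
  differentiableOn_id.prodMk ((differentiableOn_blaschkeFactor ha).const_mul _)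

lemma mapsTo_extremalDisc (ha : ‖a‖ ≤ 1) (hγa : ‖γ‖ < ‖a‖) :
    MapsTo (extremalDisc a γ) (ball 0 1) bidisk := by
  intro ζ hζ
  have hζ' : ‖ζ‖ < 1 := mem_ball_zero_iff.mp hζ
  have hγa' : ‖γ / a‖ < 1 := by
    rw [norm_div]
    exact (div_lt_one ((norm_nonneg γ).trans_lt hγa)).mpr hγa
  refine mem_bidisk.mpr ⟨hζ', ?_⟩
  calc ‖γ / a * blaschkeFactor a ζ‖ = ‖γ / a‖ * ‖blaschkeFactor a ζ‖ := norm_mul _ _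
    _ ≤ ‖γ / a‖ * 1 := by gcongr; exact norm_blaschkeFactor_le_one ha hζ'.le
    _ < 1 := by rwa [mul_one]

lemma extremalDisc_zero (ha : a ≠ 0) : extremalDisc a γ 0 = (0, γ) := by
  simp [extremalDisc, ha]

lemma extremalDisc_self : extremalDisc a γ a = (a, 0) := by
  simp [extremalDisc]

end ExtremalDisc

theorem statement17_general (a γ : ℂ) (ha0 : a ≠ 0) (ha1 : ‖a‖ < 1)
    (hγa : ‖γ‖ < ‖a‖) :
    lempert bidisk 1 (fun _ => ((a, 0) : ℂ × ℂ)) (fun _ => 1) ((0 : ℂ), γ) =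
        ((Real.log (‖a‖) : ℝ) : EReal) ∧
      ∀ f : ℂ → ℂ × ℂ, DifferentiableOn ℂ f (Metric.ball 0 1) →
        Set.MapsTo f (Metric.ball 0 1) bidisk → f 0 = ((0 : ℂ), γ) →
        ∀ ζ₁ ∈ Metric.ball (0 : ℂ) 1, f ζ₁ = (a, 0) →
          (Real.log (‖ζ₁‖) = Real.log (‖a‖) ↔
            ∃ α : ℂ, ‖α‖ = 1 ∧
              ∀ ζ ∈ Metric.ball (0 : ℂ) 1, (f ζ).1 = α * ζ) := by
  have ha : 0 < ‖a‖ := norm_pos_iff.mpr ha0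
  have schwarz : ∀ f : ℂ → ℂ × ℂ, DifferentiableOn ℂ f (ball 0 1) →
      MapsTo f (ball 0 1) bidisk → f 0 = (0, γ) → ∀ ζ₁ ∈ ball (0 : ℂ) 1, f ζ₁ = (a, 0) →
      ‖a‖ ≤ ‖ζ₁‖ := fun f hd hm hf0 ζ₁ hζ₁ hfζ₁ => by
    simpa [hfζ₁] using norm_fst_le_of_mapsTo_bidisk hd hm (by simp [hf0]) hζ₁
  constructor
  · refine IsLeast.csInf_eq ⟨?_, ?_⟩
    · refine ⟨extremalDisc a γ, differentiableOn_extremalDisc ha1.le,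
        mapsTo_extremalDisc ha1.le hγa, extremalDisc_zero ha0, fun _ => a,
        fun _ _ => ⟨mem_ball_zero_iff.mpr ha1, extremalDisc_self⟩, by simp⟩
    · rintro d ⟨f, hd, hm, hf0, ζ, hζ, rfl⟩
      obtain ⟨hζ₀, hfζ₀⟩ := hζ 0 zero_lt_one
      have hle := schwarz f hd hm hf0 _ hζ₀ hfζ₀
      simpa using Real.log_le_log ha hle
  · intro f hd hm hf0 ζ₁ hζ₁ hfζ₁
    have hle := schwarz f hd hm hf0 ζ₁ hζ₁ hfζ₁
    rw [Real.log_injOn_pos.eq_iff (ha.trans_le hle) ha]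
    constructor
    · intro heq
      exact exists_norm_eq_one_eqOn_mul_of_norm_apply_eq hd.fst (mapsTo_fst_of_mapsTo_bidisk hm)
        (by simp [hf0]) hζ₁ (norm_pos_iff.mp (ha.trans_le hle)) (by simp [hfζ₁, heq])
    · rintro ⟨α, hα, hrot⟩
      simpa [hfζ₁, hα] using (congrArg norm (hrot ζ₁ hζ₁)).symm

/-- With `a ∈ D` nonzero and `z = (0, γ)`, `0 < |γ| < |a|`, the Lempert function of the
bidisk with single pole `(a, 0)` of weight `1` satisfies `δ(z) = log |a|`; moreover an
analytic disc `f : D → D × D` with `f(0) = z` and `f(ζ₁) = (a, 0)` attains this infimum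
(i.e. `log|ζ₁| = log|a|`) if and only if its first component is a rotation. -/
theorem statement17 (a γ : ℂ) (ha0 : a ≠ 0) (ha1 : ‖a‖ < 1)
    (hγ0 : 0 < ‖γ‖) (hγa : ‖γ‖ < ‖a‖) :
    lempert bidisk 1 (fun _ => ((a, 0) : ℂ × ℂ)) (fun _ => 1) ((0 : ℂ), γ) =
        ((Real.log (‖a‖) : ℝ) : EReal) ∧
      ∀ f : ℂ → ℂ × ℂ, DifferentiableOn ℂ f (Metric.ball 0 1) →
        Set.MapsTo f (Metric.ball 0 1) bidisk → f 0 = ((0 : ℂ), γ) →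
        ∀ ζ₁ ∈ Metric.ball (0 : ℂ) 1, f ζ₁ = (a, 0) →
          (Real.log (‖ζ₁‖) = Real.log (‖a‖) ↔
            ∃ α : ℂ, ‖α‖ = 1 ∧
              ∀ ζ ∈ Metric.ball (0 : ℂ) 1, (f ζ).1 = α * ζ) :=
  statement17_general a γ ha0 ha1 hγa
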